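/- In the setting of the multivariate inclusion–exclusion formula (q families of events, counts C_i, quantities S_k), for every r ∈ ℕ^q and every odd m ≥ 0: P(C = r) ≥ ∑ (-1)^{(k_1-r_1)+⋯+(k_q-r_q)} C(k_1,r_1)⋯C(k_q,r_q) S_k, where the sum runs over all k with r_i ≤ k_i ≤ |I_i| for all i and (k_1-r_1)+⋯+(k_q-r_q) ≤ m; for even m, the reverse inequality (≤) holds. -/

import Mathlib

open MeasureTheory Finset
open scoped Classical

/-! Taking expectations reduces everything to a pointwise inequality in the vector `c` of
counts `C_i`: the integrand of `S_k` is `∏ i, (c i).choose (k i)`. Since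
`C(c, k) C(k, r) = C(c, r) C(c - r, k - r)`, the multivariate Vandermonde identity collapses the
truncated sum to `∏ i, C(c i, r i) * ∑ s ≤ m, (-1)^s C(N, s)` with `N = ∑ i, (c i - r i)`, and this
alternating partial sum is `1` for `N = 0` and `(-1)^m C(N - 1, m)` otherwise. Hence the integrand
minus the indicator of `c = r` has the sign of `(-1)^m`. -/

section Combinatorics

variable {ι : Type*} [Fintype ι] [DecidableEq ι]

theorem neg_one_pow_mul_alternating_sum_range_choose_sub_nonneg (N m : ℕ) :
    0 ≤ (-1 : ℝ) ^ m *
      (∑ s ∈ range (m + 1), (-1 : ℝ) ^ s * N.choose s - if N = 0 then 1 else 0) := by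
  cases N with
  | zero => simp [Finset.sum_range_succ']
  | succ N =>
    have h : ∑ s ∈ range (m + 1), (-1 : ℝ) ^ s * (N + 1).choose s = (-1) ^ m * N.choose m := by
      exact_mod_cast Int.alternating_sum_range_choose_eq_choose
    rw [h, if_neg N.succ_ne_zero, sub_zero, ← mul_assoc, ← pow_add, ← two_mul, pow_mul]
    simp

open Polynomial in
theorem sum_prod_choose_eq_choose_sum (n b : ι → ℕ) (hnb : n ≤ b) (s : ℕ) :
    ∑ d ∈ (Fintype.piFinset fun i => range (b i + 1)).filter (fun d => ∑ i, d i = s),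
      ∏ i, (n i).choose (d i) = (∑ i, n i).choose s := by
  have hX : ∀ i, (X + 1 : ℕ[X]) ^ n i = ∑ d ∈ range (b i + 1), C ((n i).choose d) * X ^ d := by
    intro i
    ext k
    simp only [coeff_X_add_one_pow, finsetSum_coeff, coeff_C_mul_X_pow, sum_ite_eq, mem_range]
    split_ifs with hk
    · rfl
    · exact Nat.choose_eq_zero_of_lt (by have : n i ≤ b i := hnb i; omega)
  have h : (X + 1 : ℕ[X]) ^ ∑ i, n i = ∑ d ∈ Fintype.piFinset fun i => range (b i + 1),
      C (∏ i, (n i).choose (d i)) * X ^ ∑ i, d i := by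
    rw [← prod_pow_eq_pow_sum, prod_congr rfl (fun i _ => hX i), prod_univ_sum]
    simp_rw [prod_mul_distrib, ← map_prod, prod_pow_eq_pow_sum]
  have := congrArg (coeff · s) h
  simp only [coeff_X_add_one_pow, finsetSum_coeff, coeff_C_mul_X_pow, Nat.cast_id] at this
  simp only [this, sum_filter, eq_comm]

theorem sum_neg_one_pow_mul_prod_choose_of_sum_le (n b : ι → ℕ) (hnb : n ≤ b) (m : ℕ) :
    ∑ d ∈ (Fintype.piFinset fun i => range (b i + 1)).filter (fun d => ∑ i, d i ≤ m),
      (-1 : ℝ) ^ (∑ i, d i) * ∏ i, ((n i).choose (d i) : ℝ)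
      = ∑ s ∈ range (m + 1), (-1 : ℝ) ^ s * (∑ i, n i).choose s := by
  rw [← sum_fiberwise_of_maps_to (g := fun d => ∑ i, d i) (t := range (m + 1))
    (s := (Fintype.piFinset fun i => range (b i + 1)).filter (fun d => ∑ i, d i ≤ m))
    (fun d hd => mem_range.2 (Nat.lt_succ_of_le (mem_filter.1 hd).2))]
  refine sum_congr rfl fun s hs => ?_
  have hsm : s ≤ m := Nat.lt_succ_iff.1 (mem_range.1 hs)
  rw [← sum_prod_choose_eq_choose_sum n b hnb s, Nat.cast_sum, mul_sum, filter_filter]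
  refine sum_congr (filter_congr fun d _ => ⟨And.right, fun h => ⟨h ▸ hsm, h⟩⟩) fun d hd => ?_
  rw [(mem_filter.1 hd).2]
  push_cast
  rfl

noncomputable def bonferroniSum (r B : ι → ℕ) (m : ℕ) (S : (ι → ℕ) → ℝ) : ℝ :=
  ∑ k ∈ (Fintype.piFinset fun i => Icc (r i) (B i)).filter (fun k => ∑ i, (k i - r i) ≤ m),
    (-1 : ℝ) ^ (∑ i, (k i - r i)) * (∏ i, ((k i).choose (r i) : ℝ)) * S k

theorem bonferroniSum_prod_choose_of_le {r c B : ι → ℕ} (hrc : r ≤ c) (hcB : c ≤ B) (m : ℕ) :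
    bonferroniSum r B m (fun k => ∏ i, ((c i).choose (k i) : ℝ)) =
      (∏ i, ((c i).choose (r i) : ℝ)) *
        ∑ s ∈ range (m + 1), (-1 : ℝ) ^ s * (∑ i, (c i - r i)).choose s := by
  have h := sum_neg_one_pow_mul_prod_choose_of_sum_le (c - r) (B - r) (tsub_le_tsub_right hcB r) m
  simp only [Pi.sub_apply] at h
  rw [← h, mul_sum, bonferroniSum]
  refine sum_nbij' (· - r) (r + ·) ?_ ?_ ?_ ?_ ?_
  · intro k hk
    simp only [mem_filter, Fintype.mem_piFinset, mem_Icc, mem_range] at hk ⊢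
    exact ⟨fun i => by have := hk.1 i; simp; omega, hk.2⟩
  · intro d hd
    simp only [mem_filter, Fintype.mem_piFinset, mem_Icc, mem_range] at hd ⊢
    have hrB : r ≤ B := hrc.trans hcB
    exact ⟨fun i => by have := hd.1 i; have : r i ≤ B i := hrB i; simp; omega,
      by simpa using hd.2⟩
  · intro k hk
    simp only [mem_filter, Fintype.mem_piFinset, mem_Icc] at hk
    ext i; have := hk.1 i; simp; omega
  · intro d _; ext i; simp
  · intro k hk
    simp only [mem_filter, Fintype.mem_piFinset, mem_Icc] at hk
    have hrk : ∀ i, r i ≤ k i := fun i => (hk.1 i).1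
    simp only [Pi.sub_apply]
    rw [mul_left_comm, mul_assoc, ← prod_mul_distrib, ← prod_mul_distrib]
    congr 2
    funext i
    rw [mul_comm]
    exact_mod_cast Nat.choose_mul (hrk i)

theorem bonferroniSum_prod_choose_of_not_le {r c : ι → ℕ} (hrc : ¬ r ≤ c) (B : ι → ℕ) (m : ℕ) :
    bonferroniSum r B m (fun k => ∏ i, ((c i).choose (k i) : ℝ)) = 0 := by
  obtain ⟨i, hi⟩ : ∃ i, c i < r i := by simpa [Pi.le_def] using hrc
  refine sum_eq_zero fun k hk => ?_
  have hrk : r i ≤ k i := (Fintype.mem_piFinset.1 (mem_filter.1 hk).1 i |> mem_Icc.1).1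
  refine mul_eq_zero_of_right _ (prod_eq_zero (mem_univ i) ?_)
  rw [Nat.choose_eq_zero_of_lt (hi.trans_le hrk), Nat.cast_zero]

theorem neg_one_pow_mul_bonferroniSum_prod_choose_sub_nonneg {r c B : ι → ℕ} (hcB : c ≤ B)
    (m : ℕ) :
    0 ≤ (-1 : ℝ) ^ m *
      (bonferroniSum r B m (fun k => ∏ i, ((c i).choose (k i) : ℝ)) - if c = r then 1 else 0) := by
  by_cases hrc : r ≤ c
  · have hind : (if c = r then 1 else 0 : ℝ) =
        (∏ i, ((c i).choose (r i) : ℝ)) * if ∑ i, (c i - r i) = 0 then 1 else 0 := by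
      by_cases hcr : c = r
      · subst hcr; simp
      · have hN : ∑ i, (c i - r i) ≠ 0 := fun hN => hcr <| funext fun i => by
          have := sum_eq_zero_iff.1 hN i (mem_univ i); have : r i ≤ c i := hrc i; omega
        rw [if_neg hcr, if_neg hN, mul_zero]
    rw [bonferroniSum_prod_choose_of_le hrc hcB, hind, ← mul_sub, mul_left_comm]
    exact mul_nonneg (prod_nonneg fun i _ => Nat.cast_nonneg _)
      (neg_one_pow_mul_alternating_sum_range_choose_sub_nonneg _ m)
  · have hcr : c ≠ r := fun h => hrc h.ge
    rw [bonferroniSum_prod_choose_of_not_le hrc, if_neg hcr, sub_zero, mul_zero]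

end Combinatorics

section Integral

variable {Ω ι : Type*} [MeasurableSpace Ω] {P : Measure Ω}

theorem measurableSet_iInter_biInter [Countable ι] {I : ι → Type*} {A : (i : ι) → I i → Set Ω}
    (hA : ∀ i j, MeasurableSet (A i j)) (J : (i : ι) → Finset (I i)) :
    MeasurableSet (⋂ i, ⋂ j ∈ J i, A i j) :=
  MeasurableSet.iInter fun i => Finset.measurableSet_biInter _ fun j _ => hA i j

theorem integrable_bonferroniSum [Fintype ι] [DecidableEq ι] {F : (ι → ℕ) → Ω → ℝ}
    (hF : ∀ k, Integrable (F k) P) (r B : ι → ℕ) (m : ℕ) :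
    Integrable (fun ω => bonferroniSum r B m (fun k => F k ω)) P :=
  integrable_finsetSum _ fun k _ => (hF k).const_mul _

theorem bonferroniSum_integral [Fintype ι] [DecidableEq ι] {F : (ι → ℕ) → Ω → ℝ}
    (hF : ∀ k, Integrable (F k) P) (r B : ι → ℕ) (m : ℕ) :
    bonferroniSum r B m (fun k => ∫ ω, F k ω ∂P) =
      ∫ ω, bonferroniSum r B m (fun k => F k ω) ∂P := by
  simp only [bonferroniSum]
  rw [integral_finsetSum _ fun k _ => (hF k).const_mul _]
  simp only [integral_const_mul]

theorem integrable_indicator_one [IsFiniteMeasure P] {s : Set Ω} (hs : MeasurableSet s) :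
    Integrable (s.indicator (1 : Ω → ℝ)) P :=
  (integrable_const 1).indicator hs

end Integral

section Events

variable {Ω ι : Type*} {I : ι → Type*} [∀ i, Fintype (I i)]

noncomputable def eventCount (A : (i : ι) → I i → Set Ω) (ω : Ω) (i : ι) : ℕ :=
  (univ.filter fun j => ω ∈ A i j).card

theorem measurable_eventCount [MeasurableSpace Ω] {A : (i : ι) → I i → Set Ω}
    (hA : ∀ i j, MeasurableSet (A i j)) : Measurable (eventCount A) := by
  refine measurable_pi_lambda _ fun i => ?_
  simp_rw [eventCount, card_filter]
  exact Finset.measurable_sum _ fun j _ => Measurable.ite (hA i j) measurable_const measurable_const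

theorem sum_indicator_iInter_eq_prod_choose [Fintype ι] [DecidableEq ι]
    (A : (i : ι) → I i → Set Ω) (k : ι → ℕ) (ω : Ω) :
    ∑ J ∈ Fintype.piFinset (fun i => (univ : Finset (I i)).powersetCard (k i)),
      (⋂ i, ⋂ j ∈ J i, A i j).indicator (1 : Ω → ℝ) ω =
      ∏ i, ((eventCount A ω i).choose (k i) : ℝ) := by
  have hJ : (Fintype.piFinset fun i => (univ : Finset (I i)).powersetCard (k i)).filter
      (fun J => ω ∈ ⋂ i, ⋂ j ∈ J i, A i j) =
      Fintype.piFinset fun i => (univ.filter fun j => ω ∈ A i j).powersetCard (k i) := by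
    ext J
    simp only [mem_filter, Fintype.mem_piFinset, mem_powersetCard,
      Set.mem_iInter, subset_iff, mem_univ, true_and]
    grind
  simp only [Set.indicator_apply, Pi.one_apply]
  rw [sum_boole, hJ, Fintype.card_piFinset]
  push_cast
  simp only [card_powersetCard, eventCount]

variable [MeasurableSpace Ω] [Fintype ι] [DecidableEq ι] {P : Measure Ω} {A : (i : ι) → I i → Set Ω}

theorem integrable_prod_choose_eventCount [IsFiniteMeasure P] (hA : ∀ i j, MeasurableSet (A i j))
    (k : ι → ℕ) : Integrable (fun ω => ∏ i, ((eventCount A ω i).choose (k i) : ℝ)) P := by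
  simp_rw [← sum_indicator_iInter_eq_prod_choose]
  exact integrable_finsetSum _ fun J _ =>
    integrable_indicator_one (measurableSet_iInter_biInter hA J)

theorem sum_measureReal_iInter_eq_integral [IsFiniteMeasure P] (hA : ∀ i j, MeasurableSet (A i j))
    (k : ι → ℕ) :
    ∑ J ∈ Fintype.piFinset (fun i => (univ : Finset (I i)).powersetCard (k i)),
      P.real (⋂ i, ⋂ j ∈ J i, A i j) =
      ∫ ω, ∏ i, ((eventCount A ω i).choose (k i) : ℝ) ∂P := by
  simp_rw [← sum_indicator_iInter_eq_prod_choose]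
  rw [integral_finsetSum _ fun J _ =>
    integrable_indicator_one (measurableSet_iInter_biInter hA J)]
  simp only [integral_indicator_one (measurableSet_iInter_biInter hA _)]

theorem neg_one_pow_mul_bonferroniSum_sub_measureReal_nonneg [IsFiniteMeasure P]
    (hA : ∀ i j, MeasurableSet (A i j)) (r : ι → ℕ) (m : ℕ) :
    0 ≤ (-1 : ℝ) ^ m *
      (bonferroniSum r (fun i => Fintype.card (I i)) m (fun k =>
          ∑ J ∈ Fintype.piFinset (fun i => (univ : Finset (I i)).powersetCard (k i)),
            P.real (⋂ i, ⋂ j ∈ J i, A i j)) -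
        P.real {ω | eventCount A ω = r}) := by
  have hr : MeasurableSet {ω | eventCount A ω = r} :=
    measurable_eventCount hA (measurableSet_singleton r)
  simp_rw [sum_measureReal_iInter_eq_integral hA]
  rw [bonferroniSum_integral (integrable_prod_choose_eventCount hA), ← integral_indicator_one hr,
    ← integral_sub (integrable_bonferroniSum (integrable_prod_choose_eventCount hA) _ _ _)
      (integrable_indicator_one hr), ← integral_const_mul]
  refine integral_nonneg fun ω => ?_
  simpa only [Set.indicator_apply, Set.mem_ofPred_eq, Pi.one_apply, Pi.zero_apply] using
    neg_one_pow_mul_bonferroniSum_prod_choose_sub_nonneg (r := r) (c := eventCount A ω)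
      (fun i => card_le_univ _) m

end Events

theorem stmt_3_general {Ω : Type} [MeasurableSpace Ω] (P : Measure Ω) [IsProbabilityMeasure P]
    (q : ℕ) (I : Fin q → Type) [∀ i, Fintype (I i)]
    (A : (i : Fin q) → I i → Set Ω) (hA : ∀ i j, MeasurableSet (A i j))
    (r : Fin q → ℕ) (m : ℕ) :
    (Odd m →
      (∑ k ∈ (Fintype.piFinset fun i => Finset.Icc (r i) (Fintype.card (I i))).filter
          (fun k => ∑ i, (k i - r i) ≤ m),
        (-1 : ℝ) ^ (∑ i, (k i - r i)) * (∏ i, ((k i).choose (r i) : ℝ)) *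
          ∑ J ∈ Fintype.piFinset (fun i => (Finset.univ : Finset (I i)).powersetCard (k i)),
            (P (⋂ i, ⋂ j ∈ J i, A i j)).toReal)
        ≤ (P {ω | ∀ i, (Finset.univ.filter fun j => ω ∈ A i j).card = r i}).toReal)
    ∧ (Even m →
      (P {ω | ∀ i, (Finset.univ.filter fun j => ω ∈ A i j).card = r i}).toReal ≤
      ∑ k ∈ (Fintype.piFinset fun i => Finset.Icc (r i) (Fintype.card (I i))).filter
          (fun k => ∑ i, (k i - r i) ≤ m),
        (-1 : ℝ) ^ (∑ i, (k i - r i)) * (∏ i, ((k i).choose (r i) : ℝ)) *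
          ∑ J ∈ Fintype.piFinset (fun i => (Finset.univ : Finset (I i)).powersetCard (k i)),
            (P (⋂ i, ⋂ j ∈ J i, A i j)).toReal) := by
  have hset : {ω | ∀ i, (univ.filter fun j => ω ∈ A i j).card = r i} =
      {ω | eventCount A ω = r} := by
    simp only [funext_iff, eventCount]
  have key := neg_one_pow_mul_bonferroniSum_sub_measureReal_nonneg (P := P) hA r m
  simp only [bonferroniSum, measureReal_def, ← hset] at key
  refine ⟨fun hm => ?_, fun hm => ?_⟩
  · rw [hm.neg_one_pow, neg_one_mul, neg_nonneg, sub_nonpos] at key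
    exact key
  · rw [hm.neg_one_pow, one_mul, sub_nonneg] at key
    exact key

theorem stmt_3 {Ω : Type} [MeasurableSpace Ω] (P : Measure Ω) [IsProbabilityMeasure P]
    (q : ℕ) (hq : 1 ≤ q) (I : Fin q → Type) [∀ i, Fintype (I i)]
    (A : (i : Fin q) → I i → Set Ω) (hA : ∀ i j, MeasurableSet (A i j))
    (r : Fin q → ℕ) (m : ℕ) :
    (Odd m →
      (∑ k ∈ (Fintype.piFinset fun i => Finset.Icc (r i) (Fintype.card (I i))).filter
          (fun k => ∑ i, (k i - r i) ≤ m),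
        (-1 : ℝ) ^ (∑ i, (k i - r i)) * (∏ i, ((k i).choose (r i) : ℝ)) *
          ∑ J ∈ Fintype.piFinset (fun i => (Finset.univ : Finset (I i)).powersetCard (k i)),
            (P (⋂ i, ⋂ j ∈ J i, A i j)).toReal)
        ≤ (P {ω | ∀ i, (Finset.univ.filter fun j => ω ∈ A i j).card = r i}).toReal)
    ∧ (Even m →
      (P {ω | ∀ i, (Finset.univ.filter fun j => ω ∈ A i j).card = r i}).toReal ≤
      ∑ k ∈ (Fintype.piFinset fun i => Finset.Icc (r i) (Fintype.card (I i))).filter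
          (fun k => ∑ i, (k i - r i) ≤ m),
        (-1 : ℝ) ^ (∑ i, (k i - r i)) * (∏ i, ((k i).choose (r i) : ℝ)) *
          ∑ J ∈ Fintype.piFinset (fun i => (Finset.univ : Finset (I i)).powersetCard (k i)),
            (P (⋂ i, ⋂ j ∈ J i, A i j)).toReal) :=
  stmt_3_general P q I A hA r m
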